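/- Let f : D_S → ℝ_{≥0} be the constant function 1 on the display poset of a regular abstract merge tree S, with local representation φ_T^{Θ₁} on the merge tree T = 𝓜(S), so that φ_T^{Θ₁}((v,v')) = χ_{[h_T(v), h_T(v'))}, the indicator of the height interval of the edge. If (T, φ_T^{Θ₁}) and (T', φ_{T'}^{Θ₁}) are isomorphic as weighted trees (i.e., there is a tree-structure isomorphism η : V_T → V_{T'} with φ_T^{Θ₁} = φ_{T'}^{Θ₁} ∘ η on edges), then (T, h_T) and (T', h_{T'}) are isomorphic as merge trees (η additionally satisfies h_T = h_{T'} ∘ η). -/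
import Mathlib


open MeasureTheory

/-- A merge tree: a finite rooted tree with a strictly increasing height function on the
non-root vertices (the root sits at height `+∞` and is not assigned a finite height). -/
structure MergeTreeC where
  V : Type
  fin : Finite V
  root : V
  parent : V → V
  parent_root : parent root = root
  reaches : ∀ v : V, ∃ n : ℕ, parent^[n] v = root
  ht : V → ℝ
  mono : ∀ v : V, v ≠ root → parent v ≠ root → ht v < ht (parent v)

open scoped Classical in
/-- The local representation `φ_T^{Θ₁}` of the constant function `1` on the display
poset: the edge below `v` carries the indicator of its height interval
`[h_T(v), h_T(parent v))`, the root edge being truncated at the common height `K`. -/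
noncomputable def theta1Weight (T : MergeTreeC) (K : ℝ) (v : T.V) : ℝ → ℝ :=
  Set.indicator
    (Set.Ico (T.ht v) (if T.parent v = T.root then K else T.ht (T.parent v)))
    (fun _ => (1 : ℝ))

lemma aux_not_lt {a b c d : ℝ} (hab : a < b)
    (h : Set.indicator (Set.Ico a b) (fun _ => (1:ℝ))
        =ᵐ[volume] Set.indicator (Set.Ico c d) (fun _ => (1:ℝ))) : ¬ a < c := by
  intro hac
  have hs : Set.Ico a (min b c) ⊆
      {x | Set.indicator (Set.Ico a b) (fun _ => (1:ℝ)) x ≠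
           Set.indicator (Set.Ico c d) (fun _ => (1:ℝ)) x} := by
    intro x hx
    have hx1 : x ∈ Set.Ico a b := ⟨hx.1, lt_of_lt_of_le hx.2 (min_le_left _ _)⟩
    have hx2 : x ∉ Set.Ico c d := fun h2 =>
      absurd (lt_of_lt_of_le hx.2 (min_le_right _ _)) (not_lt.2 h2.1)
    simp [Set.indicator_of_mem hx1, Set.indicator_of_notMem hx2]
  have h0 : volume (Set.Ico a (min b c)) = 0 := measure_mono_null hs h
  rw [Real.volume_Ico] at h0
  have hpos : (0:ℝ) < min b c - a := by
    have : a < min b c := lt_min hab hac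
    linarith
  exact (ENNReal.ofReal_pos.mpr hpos).ne' h0

lemma aux_eq {a b c d : ℝ} (hab : a < b) (hcd : c < d)
    (h : Set.indicator (Set.Ico a b) (fun _ => (1:ℝ))
        =ᵐ[volume] Set.indicator (Set.Ico c d) (fun _ => (1:ℝ))) : a = c :=
  le_antisymm (not_lt.1 (aux_not_lt hcd h.symm)) (not_lt.1 (aux_not_lt hab h))

/-- if two merge trees weighted by the constant-1 function are isomorphic
as weighted trees (a tree-structure isomorphism matching the `Θ₁`-weights, as elements
of `L₁`, i.e. up to a.e. equality), then they are isomorphic as merge trees: the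
isomorphism also preserves the heights. -/
theorem theta1_iso_implies_mergeTree_iso (T T' : MergeTreeC) (K : ℝ)
    (hK : ∀ v : T.V, v ≠ T.root → T.ht v < K)
    (hK' : ∀ v : T'.V, v ≠ T'.root → T'.ht v < K)
    (η : T.V ≃ T'.V) (hroot : η T.root = T'.root)
    (hpar : ∀ v : T.V, η (T.parent v) = T'.parent (η v))
    (hw : ∀ v : T.V, v ≠ T.root →
      theta1Weight T K v =ᵐ[volume] theta1Weight T' K (η v)) :
    ∀ v : T.V, v ≠ T.root → T.ht v = T'.ht (η v) := by
  classical
  intro v hv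
  have hv' : η v ≠ T'.root := fun h => hv (η.injective (h.trans hroot.symm))
  have hab : T.ht v < (if T.parent v = T.root then K else T.ht (T.parent v)) := by
    split_ifs with h
    · exact hK v hv
    · exact T.mono v hv h
  have hcd : T'.ht (η v) <
      (if T'.parent (η v) = T'.root then K else T'.ht (T'.parent (η v))) := by
    split_ifs with h
    · exact hK' (η v) hv'
    · exact T'.mono (η v) hv' h
  exact aux_eq hab hcd (hw v hv)
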